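/- Let (σ₁,σ₂) be a local umbilic-free Legendre map in curvature line coordinates on U. Assume the triples (σ₁, ∂_vσ₁, ∂_v∂_vσ₁) and (σ₂, ∂_uσ₂, ∂_u∂_uσ₂) are pointwise linearly independent, spanning the Lie cyclide bundles S₁ and S₂ respectively, that S₁(p) ⊥ S₂(p) at every point, and that the restriction of ⟨,⟩ to S₁(p) is nondegenerate (so ℝ^6 = S₁(p) ⊕ S₂(p) orthogonally). Then ∂_uσ₁ ∈ span{σ₁} at every point (f is a channel surface with circular curvature direction T₁ = ∂_u) if and only if 𝒩(∂_u) = 0, i.e., for every smooth local section ρ of S₁ one has ∂_uρ(p) ∈ S₁(p) at every point, and for every smooth local section ρ̂ of S₂ one has ∂_uρ̂(p) ∈ S₂(p) at every point (the Lie cyclides of f are constant along the leaves of T₁). -/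
import Mathlib

open scoped Topology


noncomputable section

/-- `ℝ^{4,2}`: `ℝ^6` with a bilinear form of signature (4,2). -/
abbrev V6 : Type := Fin 6 → ℝ

/-- The symmetric bilinear form of signature (4,2) on `ℝ^6`. -/
def form (x y : V6) : ℝ :=
  x 0 * y 0 + x 1 * y 1 + x 2 * y 2 + x 3 * y 3 - x 4 * y 4 - x 5 * y 5

/-- Partial derivative in the first (`u`) coordinate. -/
def pu (σ : ℝ × ℝ → V6) (p : ℝ × ℝ) : V6 := fderiv ℝ σ p (1, 0)

/-- Partial derivative in the second (`v`) coordinate. -/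
def pv (σ : ℝ × ℝ → V6) (p : ℝ × ℝ) : V6 := fderiv ℝ σ p (0, 1)

/-- The contact plane `f = span{σ₁, σ₂}`. -/
def spanF (σ₁ σ₂ : ℝ × ℝ → V6) (p : ℝ × ℝ) : Submodule ℝ V6 :=
  Submodule.span ℝ {σ₁ p, σ₂ p}

/-- A local umbilic-free Legendre map in curvature line coordinates `(u,v)` on `U`,
given by lifts `σ₁, σ₂` of the two curvature sphere congruences, with curvature
directions `T₁ = ∂_u` (for `s₁ = span{σ₁}`) and `T₂ = ∂_v` (for `s₂ = span{σ₂}`). -/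
structure IsLegendre (U : Set (ℝ × ℝ)) (σ₁ σ₂ : ℝ × ℝ → V6) : Prop where
  open_U : IsOpen U
  smooth₁ : ContDiffOn ℝ (⊤ : ℕ∞) σ₁ U
  smooth₂ : ContDiffOn ℝ (⊤ : ℕ∞) σ₂ U
  indep : ∀ p ∈ U, LinearIndependent ℝ ![σ₁ p, σ₂ p]
  iso₁₁ : ∀ p ∈ U, form (σ₁ p) (σ₁ p) = 0
  iso₁₂ : ∀ p ∈ U, form (σ₁ p) (σ₂ p) = 0
  iso₂₂ : ∀ p ∈ U, form (σ₂ p) (σ₂ p) = 0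
  contact_u : ∀ p ∈ U, form (pu σ₁ p) (σ₂ p) = 0
  contact_v : ∀ p ∈ U, form (pv σ₁ p) (σ₂ p) = 0
  curv₁ : ∀ p ∈ U, pu σ₁ p ∈ spanF σ₁ σ₂ p
  curv₂ : ∀ p ∈ U, pv σ₂ p ∈ spanF σ₁ σ₂ p
  umb₁ : ∀ p ∈ U, pv σ₁ p ∉ spanF σ₁ σ₂ p
  umb₂ : ∀ p ∈ U, pu σ₂ p ∉ spanF σ₁ σ₂ p

/-- The first Lie cyclide bundle `S₁ = span{σ₁, ∂_vσ₁, ∂_v∂_vσ₁}`. -/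
def S₁ (σ₁ : ℝ × ℝ → V6) (p : ℝ × ℝ) : Submodule ℝ V6 :=
  Submodule.span ℝ ({σ₁ p, pv σ₁ p, pv (pv σ₁) p} : Set V6)

/-- The second Lie cyclide bundle `S₂ = span{σ₂, ∂_uσ₂, ∂_u∂_uσ₂}`. -/
def S₂ (σ₂ : ℝ × ℝ → V6) (p : ℝ × ℝ) : Submodule ℝ V6 :=
  Submodule.span ℝ ({σ₂ p, pu σ₂ p, pu (pu σ₂) p} : Set V6)

/-! ### Auxiliary lemmas on the bilinear form -/

lemma form_symm (x y : V6) : form x y = form y x := by simp only [form]; ring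

lemma form_add_right (x y z : V6) : form x (y + z) = form x y + form x z := by
  simp only [form, Pi.add_apply]; ring

lemma form_smul_right (c : ℝ) (x y : V6) : form x (c • y) = c * form x y := by
  simp only [form, Pi.smul_apply, smul_eq_mul]; ring

lemma form_smul_left (c : ℝ) (x y : V6) : form (c • x) y = c * form x y := by
  simp only [form, Pi.smul_apply, smul_eq_mul]; ring

lemma form_sub_left (x y z : V6) : form (x - y) z = form x z - form y z := by
  simp only [form, Pi.sub_apply]; ring

lemma form_zero_right (x : V6) : form x 0 = 0 := by simp [form]

lemma form_span {x : V6} {s : Set V6} (h : ∀ y ∈ s, form x y = 0) :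
    ∀ y ∈ Submodule.span ℝ s, form x y = 0 := by
  intro y hy
  induction hy using Submodule.span_induction with
  | mem y hy => exact h y hy
  | zero => exact form_zero_right x
  | add a b _ _ ha hb => rw [form_add_right, ha, hb, add_zero]
  | smul c a _ ha => rw [form_smul_right, ha, mul_zero]

lemma form_nondeg {x : V6} (h : ∀ y, form x y = 0) : x = 0 := by
  funext i
  fin_cases i
  · simpa [form, Pi.single_apply] using h (Pi.single 0 1)
  · simpa [form, Pi.single_apply] using h (Pi.single 1 1)
  · simpa [form, Pi.single_apply] using h (Pi.single 2 1)
  · simpa [form, Pi.single_apply] using h (Pi.single 3 1)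
  · have := h (Pi.single 4 1); simp [form, Pi.single_apply] at this; simpa using this
  · have := h (Pi.single 5 1); simp [form, Pi.single_apply] at this; simpa using this

/-! ### Calculus lemmas -/

lemma contDiffOn_pd {U : Set (ℝ × ℝ)} (hU : IsOpen U) {f : ℝ × ℝ → V6}
    (hf : ContDiffOn ℝ (⊤ : ℕ∞) f U) (w : ℝ × ℝ) :
    ContDiffOn ℝ (⊤ : ℕ∞) (fun q => fderiv ℝ f q w) U :=
  (hf.fderiv_of_isOpen hU (by simp)).clm_apply contDiffOn_const

lemma contDiffOn_pu {U : Set (ℝ × ℝ)} (hU : IsOpen U) {f : ℝ × ℝ → V6}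
    (hf : ContDiffOn ℝ (⊤ : ℕ∞) f U) : ContDiffOn ℝ (⊤ : ℕ∞) (pu f) U := contDiffOn_pd hU hf _

lemma contDiffOn_pv {U : Set (ℝ × ℝ)} (hU : IsOpen U) {f : ℝ × ℝ → V6}
    (hf : ContDiffOn ℝ (⊤ : ℕ∞) f U) : ContDiffOn ℝ (⊤ : ℕ∞) (pv f) U := contDiffOn_pd hU hf _

lemma diffAt {U : Set (ℝ × ℝ)} (hU : IsOpen U) {f : ℝ × ℝ → V6}
    (hf : ContDiffOn ℝ (⊤ : ℕ∞) f U) {p : ℝ × ℝ} (hp : p ∈ U) : DifferentiableAt ℝ f p :=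
  (hf.differentiableOn (by simp)).differentiableAt (hU.mem_nhds hp)

/-- Clairaut / symmetry of second derivatives. -/
lemma clairaut {U : Set (ℝ × ℝ)} (hU : IsOpen U) {f : ℝ × ℝ → V6}
    (hf : ContDiffOn ℝ (⊤ : ℕ∞) f U) {p : ℝ × ℝ} (hp : p ∈ U) :
    pu (pv f) p = pv (pu f) p := by
  have hf' : ∀ᶠ q in 𝓝 p, HasFDerivAt f (fderiv ℝ f q) q := by
    filter_upwards [hU.mem_nhds hp] with q hq
    exact (diffAt hU hf hq).hasFDerivAt
  have hd1 : ContDiffOn ℝ (⊤ : ℕ∞) (fderiv ℝ f) U := hf.fderiv_of_isOpen hU (by simp)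
  have hd : DifferentiableAt ℝ (fderiv ℝ f) p :=
    (hd1.differentiableOn (by simp)).differentiableAt (hU.mem_nhds hp)
  have hsymm := second_derivative_symmetric_of_eventually hf' hd.hasFDerivAt (1,0) (0,1)
  have key : ∀ w w' : ℝ × ℝ,
      fderiv ℝ (fun q => fderiv ℝ f q w) p w' = (fderiv ℝ (fderiv ℝ f) p w') w := by
    intro w w'
    have h := hd.hasFDerivAt.clm_apply (hasFDerivAt_const w p)
    rw [h.fderiv]
    simp
  show fderiv ℝ (fun q => fderiv ℝ f q (0,1)) p (1,0)
      = fderiv ℝ (fun q => fderiv ℝ f q (1,0)) p (0,1)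
  rw [key, key]
  exact hsymm

/-- Product rule for `form` along an identity that vanishes on an open set. -/
lemma deriv_form_zero {U : Set (ℝ × ℝ)} (hU : IsOpen U) {f g : ℝ × ℝ → V6} {p : ℝ × ℝ}
    (hp : p ∈ U) (hf : DifferentiableAt ℝ f p) (hg : DifferentiableAt ℝ g p)
    (h0 : ∀ q ∈ U, form (f q) (g q) = 0) (w : ℝ × ℝ) :
    form (fderiv ℝ f p w) (g p) + form (f p) (fderiv ℝ g p w) = 0 := by
  set A := fderiv ℝ f p with hA
  set B := fderiv ℝ g p with hB
  have hfi : ∀ i : Fin 6, HasFDerivAt (fun q => f q i)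
      ((ContinuousLinearMap.proj i).comp A) p :=
    fun i => (ContinuousLinearMap.proj i : V6 →L[ℝ] ℝ).hasFDerivAt.comp p hf.hasFDerivAt
  have hgi : ∀ i : Fin 6, HasFDerivAt (fun q => g q i)
      ((ContinuousLinearMap.proj i).comp B) p :=
    fun i => (ContinuousLinearMap.proj i : V6 →L[ℝ] ℝ).hasFDerivAt.comp p hg.hasFDerivAt
  have hF := (((((((hfi 0).mul (hgi 0)).add ((hfi 1).mul (hgi 1))).add
      ((hfi 2).mul (hgi 2))).add ((hfi 3).mul (hgi 3))).sub
      ((hfi 4).mul (hgi 4))).sub ((hfi 5).mul (hgi 5)))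
  have hFf : HasFDerivAt (fun q => form (f q) (g q)) _ p := hF
  have h1 := hFf.fderiv
  have h2 : fderiv ℝ (fun q => form (f q) (g q)) p = 0 := by
    have : (fun q => form (f q) (g q)) =ᶠ[𝓝 p] (fun _ => (0:ℝ)) := by
      filter_upwards [hU.mem_nhds hp] with q hq
      exact h0 q hq
    rw [this.fderiv_eq]
    exact fderiv_const_apply 0
  rw [h2] at h1
  have h3 := congrArg (fun L => L w) h1.symm
  simp only [ContinuousLinearMap.zero_apply, ContinuousLinearMap.add_apply,
    ContinuousLinearMap.sub_apply, ContinuousLinearMap.smul_apply,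
    ContinuousLinearMap.coe_comp', Function.comp_apply,
    ContinuousLinearMap.proj_apply, smul_eq_mul] at h3
  simp only [form]
  linarith [h3]

/-! ### Linear algebra lemmas -/

lemma range_triple (a b c : V6) : Set.range ![a, b, c] = {a, b, c} := by
  ext x; simp [Matrix.range_cons, Matrix.range_empty]; tauto

lemma finrank_span_triple {a b c : V6} (h : LinearIndependent ℝ ![a, b, c]) :
    Module.finrank ℝ (Submodule.span ℝ ({a, b, c} : Set V6)) = 3 := by
  rw [← range_triple]
  simpa using finrank_span_eq_card h

lemma span_sup_top {a b c d e g : V6}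
    (h1 : LinearIndependent ℝ ![a, b, c]) (h2 : LinearIndependent ℝ ![d, e, g])
    (horth : ∀ x ∈ Submodule.span ℝ ({a,b,c} : Set V6),
      ∀ y ∈ Submodule.span ℝ ({d,e,g} : Set V6), form x y = 0)
    (hnd : ∀ x ∈ Submodule.span ℝ ({a,b,c} : Set V6),
      (∀ y ∈ Submodule.span ℝ ({a,b,c} : Set V6), form x y = 0) → x = 0) :
    Submodule.span ℝ ({a,b,c} : Set V6) ⊔ Submodule.span ℝ ({d,e,g} : Set V6) = ⊤ := by
  set S := Submodule.span ℝ ({a,b,c} : Set V6)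
  set T := Submodule.span ℝ ({d,e,g} : Set V6)
  have hinf : S ⊓ T = ⊥ := by
    rw [Submodule.eq_bot_iff]
    rintro x ⟨hxS, hxT⟩
    exact hnd x hxS (fun y hy => by rw [form_symm]; exact horth y hy x hxT)
  apply Submodule.eq_top_of_finrank_eq
  have := Submodule.finrank_sup_add_finrank_inf_eq S T
  rw [hinf] at this
  simp only [finrank_bot, add_zero] at this
  rw [this, finrank_span_triple h1, finrank_span_triple h2]
  simp [Module.finrank_pi]

lemma mem_left_of_perp_right {a b c d e g : V6}
    (h1 : LinearIndependent ℝ ![a, b, c]) (h2 : LinearIndependent ℝ ![d, e, g])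
    (horth : ∀ x ∈ Submodule.span ℝ ({a,b,c} : Set V6),
      ∀ y ∈ Submodule.span ℝ ({d,e,g} : Set V6), form x y = 0)
    (hnd : ∀ x ∈ Submodule.span ℝ ({a,b,c} : Set V6),
      (∀ y ∈ Submodule.span ℝ ({a,b,c} : Set V6), form x y = 0) → x = 0)
    {x : V6} (hx : ∀ y ∈ Submodule.span ℝ ({d,e,g} : Set V6), form x y = 0) :
    x ∈ Submodule.span ℝ ({a,b,c} : Set V6) := by
  set S := Submodule.span ℝ ({a,b,c} : Set V6)
  set T := Submodule.span ℝ ({d,e,g} : Set V6)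
  have htop := span_sup_top h1 h2 horth hnd
  have : x ∈ S ⊔ T := by rw [htop]; trivial
  obtain ⟨x₁, h₁, x₂, h₂, rfl⟩ := Submodule.mem_sup.mp this
  have hx₂ : x₂ = 0 := by
    apply form_nondeg
    intro y
    have : y ∈ S ⊔ T := by rw [htop]; trivial
    obtain ⟨y₁, hy₁, y₂, hy₂, rfl⟩ := Submodule.mem_sup.mp this
    have e1 : form x₂ y₁ = 0 := by rw [form_symm]; exact horth y₁ hy₁ x₂ h₂
    have e2 : form x₂ y₂ = 0 := by
      have : form (x₁ + x₂ - x₁) y₂ = 0 - 0 := by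
        rw [form_sub_left, hx y₂ hy₂, horth x₁ h₁ y₂ hy₂]
      simpa using this
    rw [form_add_right, e1, e2, add_zero]
  rw [hx₂, add_zero]; exact h₁

lemma mem_right_of_perp_left {a b c d e g : V6}
    (h1 : LinearIndependent ℝ ![a, b, c]) (h2 : LinearIndependent ℝ ![d, e, g])
    (horth : ∀ x ∈ Submodule.span ℝ ({a,b,c} : Set V6),
      ∀ y ∈ Submodule.span ℝ ({d,e,g} : Set V6), form x y = 0)
    (hnd : ∀ x ∈ Submodule.span ℝ ({a,b,c} : Set V6),
      (∀ y ∈ Submodule.span ℝ ({a,b,c} : Set V6), form x y = 0) → x = 0)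
    {x : V6} (hx : ∀ y ∈ Submodule.span ℝ ({a,b,c} : Set V6), form x y = 0) :
    x ∈ Submodule.span ℝ ({d,e,g} : Set V6) := by
  set S := Submodule.span ℝ ({a,b,c} : Set V6)
  set T := Submodule.span ℝ ({d,e,g} : Set V6)
  have htop := span_sup_top h1 h2 horth hnd
  have : x ∈ S ⊔ T := by rw [htop]; trivial
  obtain ⟨x₁, h₁, x₂, h₂, rfl⟩ := Submodule.mem_sup.mp this
  have hx₁ : x₁ = 0 := by
    apply hnd x₁ h₁
    intro y hy
    have : form (x₁ + x₂ - x₂) y = 0 - 0 := by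
      rw [form_sub_left, hx y hy, form_symm, horth y hy x₂ h₂]
    simpa using this
  rw [hx₁, zero_add]; exact h₂

/-- An umbilic-free Legendre map is a channel surface with circular curvature direction
`T₁ = ∂_u` if and only if its Lie cyclides are constant along the leaves of `T₁`, i.e.
`𝒩(∂_u) = 0`: the `u`-derivative of every smooth local section of `S₁` (resp. `S₂`)
stays in `S₁` (resp. `S₂`). -/
theorem channel_iff_lie_cyclides_constant
    (U : Set (ℝ × ℝ)) (σ₁ σ₂ : ℝ × ℝ → V6)
    (hL : IsLegendre U σ₁ σ₂)
    (hindep₁ : ∀ p ∈ U, LinearIndependent ℝ ![σ₁ p, pv σ₁ p, pv (pv σ₁) p])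
    (hindep₂ : ∀ p ∈ U, LinearIndependent ℝ ![σ₂ p, pu σ₂ p, pu (pu σ₂) p])
    (horth : ∀ p ∈ U, ∀ x ∈ S₁ σ₁ p, ∀ y ∈ S₂ σ₂ p, form x y = 0)
    (hnondeg : ∀ p ∈ U, ∀ x ∈ S₁ σ₁ p, (∀ y ∈ S₁ σ₁ p, form x y = 0) → x = 0) :
    (∀ p ∈ U, pu σ₁ p ∈ Submodule.span ℝ ({σ₁ p} : Set V6)) ↔
      ((∀ W : Set (ℝ × ℝ), IsOpen W → W ⊆ U →
        ∀ ρ : ℝ × ℝ → V6, ContDiffOn ℝ (⊤ : ℕ∞) ρ W →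
          (∀ p ∈ W, ρ p ∈ S₁ σ₁ p) → ∀ p ∈ W, pu ρ p ∈ S₁ σ₁ p) ∧
       (∀ W : Set (ℝ × ℝ), IsOpen W → W ⊆ U →
        ∀ ρ : ℝ × ℝ → V6, ContDiffOn ℝ (⊤ : ℕ∞) ρ W →
          (∀ p ∈ W, ρ p ∈ S₂ σ₂ p) → ∀ p ∈ W, pu ρ p ∈ S₂ σ₂ p)) := by
  have hU : IsOpen U := hL.open_U
  have hS1 : ContDiffOn ℝ (⊤ : ℕ∞) σ₁ U := hL.smooth₁
  have hS2 : ContDiffOn ℝ (⊤ : ℕ∞) σ₂ U := hL.smooth₂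
  -- smoothness of derived functions
  have c_av : ContDiffOn ℝ (⊤ : ℕ∞) (pv σ₁) U := contDiffOn_pv hU hS1
  have c_avv : ContDiffOn ℝ (⊤ : ℕ∞) (pv (pv σ₁)) U := contDiffOn_pv hU c_av
  have c_au : ContDiffOn ℝ (⊤ : ℕ∞) (pu σ₁) U := contDiffOn_pu hU hS1
  have c_auv : ContDiffOn ℝ (⊤ : ℕ∞) (pu (pv σ₁)) U := contDiffOn_pu hU c_av
  have c_bu : ContDiffOn ℝ (⊤ : ℕ∞) (pu σ₂) U := contDiffOn_pu hU hS2
  have c_buu : ContDiffOn ℝ (⊤ : ℕ∞) (pu (pu σ₂)) U := contDiffOn_pu hU c_bu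
  have c_buuv : ContDiffOn ℝ (⊤ : ℕ∞) (pv (pu (pu σ₂))) U := contDiffOn_pv hU c_buu
  -- generator memberships
  have g1 : ∀ q, σ₁ q ∈ S₁ σ₁ q := fun q => Submodule.subset_span (by simp)
  have g2 : ∀ q, pv σ₁ q ∈ S₁ σ₁ q := fun q => Submodule.subset_span (by simp)
  have g3 : ∀ q, pv (pv σ₁) q ∈ S₁ σ₁ q := fun q => Submodule.subset_span (by simp)
  have k1 : ∀ q, σ₂ q ∈ S₂ σ₂ q := fun q => Submodule.subset_span (by simp)
  have k2 : ∀ q, pu σ₂ q ∈ S₂ σ₂ q := fun q => Submodule.subset_span (by simp)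
  have k3 : ∀ q, pu (pu σ₂) q ∈ S₂ σ₂ q := fun q => Submodule.subset_span (by simp)
  -- membership criteria via the orthogonal decomposition
  have hmem1 : ∀ p ∈ U, ∀ x : V6, form x (σ₂ p) = 0 → form x (pu σ₂ p) = 0 →
      form x (pu (pu σ₂) p) = 0 → x ∈ S₁ σ₁ p := by
    intro p hp x e1 e2 e3
    apply mem_left_of_perp_right (hindep₁ p hp) (hindep₂ p hp) (horth p hp) (hnondeg p hp)
    apply form_span
    intro y hy
    simp only [Set.mem_insert_iff, Set.mem_singleton_iff] at hy
    rcases hy with rfl | rfl | rfl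
    exacts [e1, e2, e3]
  have hmem2 : ∀ p ∈ U, ∀ x : V6, form x (σ₁ p) = 0 → form x (pv σ₁ p) = 0 →
      form x (pv (pv σ₁) p) = 0 → x ∈ S₂ σ₂ p := by
    intro p hp x e1 e2 e3
    apply mem_right_of_perp_left (hindep₁ p hp) (hindep₂ p hp) (horth p hp) (hnondeg p hp)
    apply form_span
    intro y hy
    simp only [Set.mem_insert_iff, Set.mem_singleton_iff] at hy
    rcases hy with rfl | rfl | rfl
    exacts [e1, e2, e3]
  -- base orthogonality identities
  have B11 : ∀ q ∈ U, form (σ₁ q) (σ₂ q) = 0 := fun q hq => horth q hq _ (g1 q) _ (k1 q)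
  have B12 : ∀ q ∈ U, form (σ₁ q) (pu σ₂ q) = 0 := fun q hq => horth q hq _ (g1 q) _ (k2 q)
  have B13 : ∀ q ∈ U, form (σ₁ q) (pu (pu σ₂) q) = 0 :=
    fun q hq => horth q hq _ (g1 q) _ (k3 q)
  have B21 : ∀ q ∈ U, form (pv σ₁ q) (σ₂ q) = 0 := fun q hq => horth q hq _ (g2 q) _ (k1 q)
  have B22 : ∀ q ∈ U, form (pv σ₁ q) (pu σ₂ q) = 0 :=
    fun q hq => horth q hq _ (g2 q) _ (k2 q)
  have B23 : ∀ q ∈ U, form (pv σ₁ q) (pu (pu σ₂) q) = 0 :=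
    fun q hq => horth q hq _ (g2 q) _ (k3 q)
  have B31 : ∀ q ∈ U, form (pv (pv σ₁) q) (σ₂ q) = 0 :=
    fun q hq => horth q hq _ (g3 q) _ (k1 q)
  have B32 : ∀ q ∈ U, form (pv (pv σ₁) q) (pu σ₂ q) = 0 :=
    fun q hq => horth q hq _ (g3 q) _ (k2 q)
  have B33 : ∀ q ∈ U, form (pv (pv σ₁) q) (pu (pu σ₂) q) = 0 :=
    fun q hq => horth q hq _ (g3 q) _ (k3 q)
  constructor
  · -- forward direction: channel ⇒ 𝒩(∂_u) = 0
    intro hchan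
    -- the pointwise channel coefficient
    have hc : ∀ q ∈ U, ∃ c : ℝ, c • σ₁ q = pu σ₁ q :=
      fun q hq => Submodule.mem_span_singleton.mp (hchan q hq)
    have gau : ∀ q ∈ U, pu σ₁ q ∈ S₁ σ₁ q := by
      intro q hq
      obtain ⟨c, hcq⟩ := hc q hq
      rw [← hcq]
      exact Submodule.smul_mem _ _ (g1 q)
    -- derived identities
    have D1 : ∀ q ∈ U, form (σ₁ q) (pv (pu (pu σ₂)) q) = 0 := by
      intro q hq
      have h := deriv_form_zero hU hq (diffAt hU hS1 hq) (diffAt hU c_buu hq) B13 (0,1)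
      have h2 := B23 q hq
      simp only [pu, pv] at h h2 ⊢
      linarith
    have D2 : ∀ q ∈ U, form (pv σ₁ q) (pv (pu (pu σ₂)) q) = 0 := by
      intro q hq
      have h := deriv_form_zero hU hq (diffAt hU c_av hq) (diffAt hU c_buu hq) B23 (0,1)
      have h2 := B33 q hq
      simp only [pu, pv] at h h2 ⊢
      linarith
    have D3 : ∀ q ∈ U, form (σ₁ q) (pv (pv (pu (pu σ₂))) q) = 0 := by
      intro q hq
      have h := deriv_form_zero hU hq (diffAt hU hS1 hq) (diffAt hU c_buuv hq) D1 (0,1)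
      have h2 := D2 q hq
      simp only [pu, pv] at h h2 ⊢
      linarith
    have E1 : ∀ q ∈ U, form (pu (pv σ₁) q) (σ₂ q) = 0 := by
      intro q hq
      have h := deriv_form_zero hU hq (diffAt hU c_av hq) (diffAt hU hS2 hq) B21 (1,0)
      have h2 := B22 q hq
      simp only [pu, pv] at h h2 ⊢
      linarith
    have E2 : ∀ q ∈ U, form (pu (pv σ₁) q) (pu σ₂ q) = 0 := by
      intro q hq
      have h := deriv_form_zero hU hq (diffAt hU c_av hq) (diffAt hU c_bu hq) B22 (1,0)
      have h2 := B23 q hq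
      simp only [pu, pv] at h h2 ⊢
      linarith
    have G0 : ∀ q ∈ U, form (pu σ₁ q) (pu (pu σ₂) q) = 0 := by
      intro q hq
      obtain ⟨c, hcq⟩ := hc q hq
      rw [← hcq, form_smul_left, B13 q hq, mul_zero]
    have G1 : ∀ q ∈ U, form (pu σ₁ q) (pv (pu (pu σ₂)) q) = 0 := by
      intro q hq
      obtain ⟨c, hcq⟩ := hc q hq
      rw [← hcq, form_smul_left, D1 q hq, mul_zero]
    have E3 : ∀ q ∈ U, form (pu (pv σ₁) q) (pu (pu σ₂) q) = 0 := by
      intro q hq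
      have h := deriv_form_zero hU hq (diffAt hU c_au hq) (diffAt hU c_buu hq) G0 (0,1)
      have h2 := G1 q hq
      have hcl := clairaut hU hS1 hq
      rw [hcl]
      simp only [pu, pv] at h h2 ⊢
      linarith
    have E4 : ∀ q ∈ U, form (pu (pv σ₁) q) (pv (pu (pu σ₂)) q) = 0 := by
      intro q hq
      have h := deriv_form_zero hU hq (diffAt hU c_au hq) (diffAt hU c_buuv hq) G1 (0,1)
      have h2 : form (pu σ₁ q) (pv (pv (pu (pu σ₂))) q) = 0 := by
        obtain ⟨c, hcq⟩ := hc q hq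
        rw [← hcq, form_smul_left, D3 q hq, mul_zero]
      have hcl := clairaut hU hS1 hq
      rw [hcl]
      simp only [pu, pv] at h h2 ⊢
      linarith
    have E5 : ∀ q ∈ U, form (pu (pv (pv σ₁)) q) (σ₂ q) = 0 := by
      intro q hq
      have h := deriv_form_zero hU hq (diffAt hU c_avv hq) (diffAt hU hS2 hq) B31 (1,0)
      have h2 := B32 q hq
      simp only [pu, pv] at h h2 ⊢
      linarith
    have E6 : ∀ q ∈ U, form (pu (pv (pv σ₁)) q) (pu σ₂ q) = 0 := by
      intro q hq
      have h := deriv_form_zero hU hq (diffAt hU c_avv hq) (diffAt hU c_bu hq) B32 (1,0)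
      have h2 := B33 q hq
      simp only [pu, pv] at h h2 ⊢
      linarith
    have E7 : ∀ q ∈ U, form (pu (pv (pv σ₁)) q) (pu (pu σ₂) q) = 0 := by
      intro q hq
      have h := deriv_form_zero hU hq (diffAt hU c_auv hq) (diffAt hU c_buu hq) E3 (0,1)
      have h2 := E4 q hq
      have hcl := clairaut hU c_av hq
      rw [hcl]
      simp only [pu, pv] at h h2 ⊢
      linarith
    -- symmetrized base identities
    have B13s : ∀ q ∈ U, form (pu (pu σ₂) q) (σ₁ q) = 0 := by
      intro q hq; rw [form_symm]; exact B13 q hq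
    have B23s : ∀ q ∈ U, form (pu (pu σ₂) q) (pv σ₁ q) = 0 := by
      intro q hq; rw [form_symm]; exact B23 q hq
    have B33s : ∀ q ∈ U, form (pu (pu σ₂) q) (pv (pv σ₁) q) = 0 := by
      intro q hq; rw [form_symm]; exact B33 q hq
    have K1 : ∀ q ∈ U, form (pu (pu (pu σ₂)) q) (σ₁ q) = 0 := by
      intro q hq
      have h := deriv_form_zero hU hq (diffAt hU c_buu hq) (diffAt hU hS1 hq) B13s (1,0)
      have h2 : form (pu (pu σ₂) q) (pu σ₁ q) = 0 := by
        obtain ⟨c, hcq⟩ := hc q hq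
        rw [← hcq, form_smul_right, B13s q hq, mul_zero]
      simp only [pu, pv] at h h2 ⊢
      linarith
    have K2 : ∀ q ∈ U, form (pu (pu (pu σ₂)) q) (pv σ₁ q) = 0 := by
      intro q hq
      have h := deriv_form_zero hU hq (diffAt hU c_buu hq) (diffAt hU c_av hq) B23s (1,0)
      have h2 : form (pu (pu σ₂) q) (pu (pv σ₁) q) = 0 := by
        rw [form_symm]; exact E3 q hq
      simp only [pu, pv] at h h2 ⊢
      linarith
    have K3 : ∀ q ∈ U, form (pu (pu (pu σ₂)) q) (pv (pv σ₁) q) = 0 := by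
      intro q hq
      have h := deriv_form_zero hU hq (diffAt hU c_buu hq) (diffAt hU c_avv hq) B33s (1,0)
      have h2 : form (pu (pu σ₂) q) (pu (pv (pv σ₁)) q) = 0 := by
        rw [form_symm]; exact E7 q hq
      simp only [pu, pv] at h h2 ⊢
      linarith
    -- memberships
    have M2 : ∀ q ∈ U, pu (pv σ₁) q ∈ S₁ σ₁ q :=
      fun q hq => hmem1 q hq _ (E1 q hq) (E2 q hq) (E3 q hq)
    have M3 : ∀ q ∈ U, pu (pv (pv σ₁)) q ∈ S₁ σ₁ q :=
      fun q hq => hmem1 q hq _ (E5 q hq) (E6 q hq) (E7 q hq)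
    have M4 : ∀ q ∈ U, pu (pu (pu σ₂)) q ∈ S₂ σ₂ q :=
      fun q hq => hmem2 q hq _ (K1 q hq) (K2 q hq) (K3 q hq)
    constructor
    · -- sections of S₁
      intro W hWo hWU ρ hρ hρS p hp
      have hpU : p ∈ U := hWU hp
      have base : ∀ h : ℝ × ℝ → V6, (∀ q ∈ U, h q ∈ S₂ σ₂ q) → DifferentiableAt ℝ h p →
          (∀ q ∈ U, pu h q ∈ S₂ σ₂ q) → form (pu ρ p) (h p) = 0 := by
        intro h hmem hdiff hpum
        have b0 : ∀ q ∈ W, form (ρ q) (h q) = 0 :=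
          fun q hq => horth q (hWU hq) _ (hρS q hq) _ (hmem q (hWU hq))
        have hd := deriv_form_zero hWo hp (diffAt hWo hρ hp) hdiff b0 (1,0)
        have h2 : form (ρ p) (pu h p) = 0 :=
          horth p hpU _ (hρS p hp) _ (hpum p hpU)
        simp only [pu, pv] at hd h2 ⊢
        linarith
      exact hmem1 p hpU _
        (base σ₂ (fun q _ => k1 q) (diffAt hU hS2 hpU) (fun q hq => k2 q))
        (base (pu σ₂) (fun q _ => k2 q) (diffAt hU c_bu hpU) (fun q hq => k3 q))
        (base (pu (pu σ₂)) (fun q _ => k3 q) (diffAt hU c_buu hpU) M4)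
    · -- sections of S₂
      intro W hWo hWU ρ hρ hρS p hp
      have hpU : p ∈ U := hWU hp
      have base : ∀ g : ℝ × ℝ → V6, (∀ q ∈ U, g q ∈ S₁ σ₁ q) → DifferentiableAt ℝ g p →
          (∀ q ∈ U, pu g q ∈ S₁ σ₁ q) → form (pu ρ p) (g p) = 0 := by
        intro g hmem hdiff hpum
        have b0 : ∀ q ∈ W, form (ρ q) (g q) = 0 := by
          intro q hq
          rw [form_symm]
          exact horth q (hWU hq) _ (hmem q (hWU hq)) _ (hρS q hq)
        have hd := deriv_form_zero hWo hp (diffAt hWo hρ hp) hdiff b0 (1,0)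
        have h2 : form (ρ p) (pu g p) = 0 := by
          rw [form_symm]
          exact horth p hpU _ (hpum p hpU) _ (hρS p hp)
        simp only [pu, pv] at hd h2 ⊢
        linarith
      exact hmem2 p hpU _
        (base σ₁ (fun q _ => g1 q) (diffAt hU hS1 hpU) gau)
        (base (pv σ₁) (fun q _ => g2 q) (diffAt hU c_av hpU) M2)
        (base (pv (pv σ₁)) (fun q _ => g3 q) (diffAt hU c_avv hpU) M3)
  · -- backward direction
    rintro ⟨hN1, -⟩ p hp
    have h1 : pu σ₁ p ∈ S₁ σ₁ p :=
      hN1 U hU subset_rfl σ₁ hS1 (fun q _ => g1 q) p hp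
    obtain ⟨a, b, hab⟩ := Submodule.mem_span_pair.mp (hL.curv₁ p hp)
    have hx1 : b • σ₂ p ∈ S₁ σ₁ p := by
      have hx : b • σ₂ p = pu σ₁ p - a • σ₁ p := by
        rw [← hab]; abel
      rw [hx]
      exact Submodule.sub_mem _ h1 (Submodule.smul_mem _ _ (g1 p))
    have hx2 : b • σ₂ p ∈ S₂ σ₂ p := Submodule.smul_mem _ _ (k1 p)
    have hzero : b • σ₂ p = 0 := by
      apply hnondeg p hp _ hx1
      intro y hy
      rw [form_symm]
      exact horth p hp y hy _ hx2
    have hσ₂ : σ₂ p ≠ 0 := by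
      have := (hL.indep p hp).ne_zero 1
      simpa using this
    have hb : b = 0 := by
      rcases smul_eq_zero.mp hzero with hb | h
      · exact hb
      · exact absurd h hσ₂
    rw [Submodule.mem_span_singleton]
    exact ⟨a, by rw [← hab, hb, zero_smul, add_zero]⟩
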